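/- Let n be a positive integer, H a symmetric n×n real matrix, and λ0, λm, s positive reals with 0 < s ≤ 2/λm, such that (λ0/2)‖v‖² ≤ vᵀHv ≤ λm‖v‖² for all v ∈ ℝⁿ. Let Δ : ℝ → ℝⁿ be twice continuously differentiable and satisfy Δ''(t) + √(2λ0) Δ'(t) + √s H Δ'(t) + (1 + √(λ0 s/2)) H Δ(t) = 0 for all t ≥ 0. Define V(t) := (1 + √(λ0 s/2)) L̂(t) + (1/4)‖Δ'(t)‖² + (1/4)‖Δ'(t) + √(2λ0) Δ(t) + √s H Δ(t)‖², where L̂(t) := (1/2) Δ(t)ᵀ H Δ(t), and set α := √(2 λ0 s)/4 and ρ*_NAG(α) := (1/2)(4 + 3α − √(8 + 16α + 9α²)). Then for all t ≥ 0, V(t) ≤ exp(−ρ*_NAG(α) √(λ0/2) t) · V(0). -/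

import Mathlib

/-!
With `c = √(2λ₀)` and `r = √s` one has `√(λ₀ s / 2) = c r / 2` and `α = c r / 4`. In an
orthonormal eigenbasis of `H` the ODE decouples into scalar damped oscillators
`x'' + m x' + P x = 0` with `m = c + r μ`, `P = (1 + c r / 2) μ`, one for each eigenvalue
`μ ≥ λ₀ / 2 = c² / 4`, and `V` is the sum of their energies `dampedEnergy m P x x'`.
Such an energy dissipates at the rate `(m / 2) (x'² + P x²)`, which dominates `k E` as soon as
a 2 × 2 discriminant is nonpositive. For `k = ρ c / 2` with `ρ = ρ*_NAG(α)`, a root of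
`ρ² - (4 + 3α) ρ + 2 + 2α`, this is a polynomial inequality in `α ≥ 0` and `4 μ / c² - 1 ≥ 0`
with an explicit certificate. Grönwall's inequality then gives every mode, hence `V`, the decay
`exp (-ρ c t / 2)`.
-/

open Real
open scoped RealInnerProductSpace

noncomputable def dampedEnergy (m P x v : ℝ) : ℝ :=
  P / 2 * x ^ 2 + v ^ 2 / 4 + (v + m * x) ^ 2 / 4

theorem le_exp_mul_mul_of_hasDerivAt_le {f f' : ℝ → ℝ} {K : ℝ}
    (hf : ∀ t, 0 ≤ t → HasDerivAt f (f' t) t) (hbound : ∀ t, 0 ≤ t → f' t ≤ K * f t)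
    {t : ℝ} (ht : 0 ≤ t) : f t ≤ exp (K * t) * f 0 := by
  have h := le_gronwallBound_of_liminf_deriv_right_le (ε := 0)
    (fun x hx => (hf x hx.1).continuousAt.continuousWithinAt)
    (fun x hx _ hr => (hf x hx.1).hasDerivWithinAt.liminf_right_slope_le hr) le_rfl
    (fun x hx => by simpa using hbound x hx.1) t ⟨ht, le_rfl⟩
  rwa [gronwallBound_ε0, sub_zero, mul_comm] at h

theorem hasDerivAt_dampedEnergy {m P a t : ℝ} {x v : ℝ → ℝ}
    (hx : HasDerivAt x (v t) t) (hv : HasDerivAt v a t) (hode : a + m * v t + P * x t = 0) :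
    HasDerivAt (fun t => dampedEnergy m P (x t) (v t))
      (-(m / 2 * (v t ^ 2 + P * x t ^ 2))) t := by
  have h := (((hx.fun_pow 2).const_mul (P / 2)).fun_add ((hv.fun_pow 2).div_const 4)).fun_add
    (((hv.fun_add (hx.const_mul m)).fun_pow 2).div_const 4)
  refine h.congr_deriv ?_
  linear_combination (v t + m * x t / 2) * hode

theorem mul_dampedEnergy_le {m P k : ℝ} (hkm : k < m)
    (hdisc : k * m ^ 2 * (2 * m - k) ≤ 4 * P * (m - k) ^ 2) (x v : ℝ) :
    k * dampedEnergy m P x v ≤ m / 2 * (v ^ 2 + P * x ^ 2) := by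
  have key : 2 * (m - k) * (m / 2 * (v ^ 2 + P * x ^ 2) - k * dampedEnergy m P x v) =
      ((m - k) * v - k * m * x / 2) ^ 2
        + (4 * P * (m - k) ^ 2 - k * m ^ 2 * (2 * m - k)) / 4 * x ^ 2 := by
    unfold dampedEnergy; ring
  have hpos : 0 < 2 * (m - k) := by linarith
  have hprod : 0 ≤ 2 * (m - k) * (m / 2 * (v ^ 2 + P * x ^ 2) - k * dampedEnergy m P x v) := by
    have := sub_nonneg.2 hdisc
    rw [key]; positivity
  exact sub_nonneg.1 (nonneg_of_mul_nonneg_right hprod hpos)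

theorem dampedEnergy_le_exp {m P k : ℝ} (hkm : k < m)
    (hdisc : k * m ^ 2 * (2 * m - k) ≤ 4 * P * (m - k) ^ 2) {x v a : ℝ → ℝ}
    (hx : ∀ t, 0 ≤ t → HasDerivAt x (v t) t) (hv : ∀ t, 0 ≤ t → HasDerivAt v (a t) t)
    (hode : ∀ t, 0 ≤ t → a t + m * v t + P * x t = 0) {t : ℝ} (ht : 0 ≤ t) :
    dampedEnergy m P (x t) (v t) ≤ exp (-k * t) * dampedEnergy m P (x 0) (v 0) :=
  le_exp_mul_mul_of_hasDerivAt_le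
    (fun t ht => hasDerivAt_dampedEnergy (hx t ht) (hv t ht) (hode t ht))
    (fun t _ => by linarith [mul_dampedEnergy_le hkm hdisc (x t) (v t)]) ht

noncomputable def nagRate (a : ℝ) : ℝ := 1 / 2 * (4 + 3 * a - √(8 + 16 * a + 9 * a ^ 2))

theorem nagRate_sq (a : ℝ) : nagRate a ^ 2 = (4 + 3 * a) * nagRate a - 2 - 2 * a := by
  have h : √(8 + 16 * a + 9 * a ^ 2) ^ 2 = 8 + 16 * a + 9 * a ^ 2 :=
    sq_sqrt (by nlinarith [sq_nonneg (3 * a + 8 / 3)])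
  unfold nagRate
  linear_combination (1 / 4) * h

theorem nagRate_le_two_thirds (a : ℝ) : nagRate a ≤ 2 / 3 := by
  have h : 8 / 3 + 3 * a ≤ √(8 + 16 * a + 9 * a ^ 2) :=
    le_sqrt_of_sq_le (by nlinarith)
  unfold nagRate
  linarith

/-- The case `c = 1` of `nagRate_discriminant`, with eigenvalue `μ = (1 + u) / 4`. -/
theorem nagRate_discriminant_normalized {a u : ℝ} (ha : 0 ≤ a) (hu : 0 ≤ u) :
    nagRate a / 2 * (1 + a * (1 + u)) ^ 2 * (2 * (1 + a * (1 + u)) - nagRate a / 2)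
      ≤ (1 + 2 * a) * (1 + u) * (1 + a * (1 + u) - nagRate a / 2) ^ 2 := by
  set ρ := nagRate a
  have hρ : 0 ≤ 2 / 3 - ρ := sub_nonneg.2 (nagRate_le_two_thirds a)
  have hA : (0 : ℝ) ≤ u / 2 + 2 / 3 * a + 2 * a * u + 4 / 3 * a * u ^ 2 + 11 / 6 * a ^ 2
      + 14 / 3 * a ^ 2 * u + 23 / 6 * a ^ 2 * u ^ 2 + a ^ 2 * u ^ 3 + 4 / 3 * a ^ 3
      + 4 * a ^ 3 * u + 4 * a ^ 3 * u ^ 2 + 4 / 3 * a ^ 3 * u ^ 3 := by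
    positivity
  have hB : (0 : ℝ) ≤ 1 / 2 * a + 9 / 4 * a * u + a * u ^ 2 + a ^ 2 + 5 * a ^ 2 * u
      + 4 * a ^ 2 * u ^ 2 + 1 / 4 * a ^ 3 + 3 / 2 * a ^ 3 * u + 9 / 4 * a ^ 3 * u ^ 2
      + a ^ 3 * u ^ 3 := by
    positivity
  linear_combination hA + mul_nonneg hρ hB
    - ((1 + 2 * a) * (1 + u) + (1 + a * (1 + u)) ^ 2) / 4 * nagRate_sq a

theorem nagRate_mul_lt {c r μ : ℝ} (hc : 0 < c) (hr : 0 ≤ r) (hμ : 0 ≤ μ) :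
    nagRate (c * r / 4) * (c / 2) < c + r * μ := by
  nlinarith [nagRate_le_two_thirds (c * r / 4), mul_nonneg hr hμ]

theorem nagRate_discriminant {c r μ : ℝ} (hc : 0 < c) (hr : 0 ≤ r) (hμ : c ^ 2 / 4 ≤ μ) :
    nagRate (c * r / 4) * (c / 2) * (c + r * μ) ^ 2
        * (2 * (c + r * μ) - nagRate (c * r / 4) * (c / 2))
      ≤ 4 * ((1 + c * r / 2) * μ) * (c + r * μ - nagRate (c * r / 4) * (c / 2)) ^ 2 := by
  obtain ⟨u, hu, rfl⟩ : ∃ u, 0 ≤ u ∧ μ = c ^ 2 * (1 + u) / 4 :=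
    ⟨4 * μ / c ^ 2 - 1, by rw [sub_nonneg, le_div_iff₀ (by positivity)]; linarith,
      by field_simp; ring⟩
  have h := mul_le_mul_of_nonneg_left
    (nagRate_discriminant_normalized (a := c * r / 4) (by positivity) hu)
    (by positivity : 0 ≤ c ^ 4)
  linear_combination h

variable {E : Type*} [NormedAddCommGroup E] [InnerProductSpace ℝ E] [FiniteDimensional ℝ E]

/-- The Lyapunov function `V` at `Δ = x`, `Δ' = w`, with `c = √(2λ₀)`, `r = √s`,
`β = √(λ₀ s / 2)`. -/
noncomputable def nagLyapunov (T : E →ₗ[ℝ] E) (c r β : ℝ) (x w : E) : ℝ :=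
  (1 + β) * ((1 / 2) * ⟪x, T x⟫) + (1 / 4) * ‖w‖ ^ 2 + (1 / 4) * ‖w + c • x + r • T x‖ ^ 2

namespace LinearMap.IsSymmetric

variable {T : E →ₗ[ℝ] E}

theorem inner_eigenvectorBasis_apply (hT : T.IsSymmetric) (v : E)
    (i : Fin (Module.finrank ℝ E)) :
    ⟪hT.eigenvectorBasis rfl i, T v⟫ =
      hT.eigenvalues rfl i * ⟪hT.eigenvectorBasis rfl i, v⟫ := by
  rw [← hT, hT.apply_eigenvectorBasis]
  exact real_inner_smul_left _ _ _

theorem le_eigenvalues (hT : T.IsSymmetric) {m : ℝ} (hm : ∀ v, m * ‖v‖ ^ 2 ≤ ⟪v, T v⟫)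
    (i : Fin (Module.finrank ℝ E)) :
    m ≤ hT.eigenvalues rfl i := by
  have h := hm (hT.eigenvectorBasis rfl i)
  rwa [hT.inner_eigenvectorBasis_apply, real_inner_self_eq_norm_sq,
    (hT.eigenvectorBasis rfl).orthonormal.1 i, one_pow, mul_one, mul_one] at h

theorem nagLyapunov_eq_sum (hT : T.IsSymmetric) (c r β : ℝ) (x w : E) :
    nagLyapunov T c r β x w = ∑ i, dampedEnergy (c + r * hT.eigenvalues rfl i)
      ((1 + β) * hT.eigenvalues rfl i) ⟪hT.eigenvectorBasis rfl i, x⟫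
      ⟪hT.eigenvectorBasis rfl i, w⟫ := by
  have hTx : ⟪x, T x⟫ = ∑ i, hT.eigenvalues rfl i * ⟪hT.eigenvectorBasis rfl i, x⟫ ^ 2 := by
    rw [← (hT.eigenvectorBasis rfl).sum_inner_mul_inner]
    refine Finset.sum_congr rfl fun i _ => ?_
    rw [hT.inner_eigenvectorBasis_apply, real_inner_comm]; ring
  unfold nagLyapunov dampedEnergy
  rw [hTx, ← (hT.eigenvectorBasis rfl).sum_sq_inner_right w,
    ← (hT.eigenvectorBasis rfl).sum_sq_inner_right (w + c • x + r • T x)]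
  simp only [inner_add_right, real_inner_smul_right, hT.inner_eigenvectorBasis_apply,
    Finset.mul_sum, ← Finset.sum_add_distrib]
  refine Finset.sum_congr rfl fun i _ => ?_
  ring

theorem nagLyapunov_le_exp (hT : T.IsSymmetric) {c r : ℝ} (hc : 0 < c) (hr : 0 ≤ r)
    (hlow : ∀ v, c ^ 2 / 4 * ‖v‖ ^ 2 ≤ ⟪v, T v⟫) {x v a : ℝ → E}
    (hx : ∀ t, 0 ≤ t → HasDerivAt x (v t) t) (hv : ∀ t, 0 ≤ t → HasDerivAt v (a t) t)
    (hode : ∀ t, 0 ≤ t → a t + c • v t + r • T (v t) + (1 + c * r / 2) • T (x t) = 0)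
    {t : ℝ} (ht : 0 ≤ t) :
    nagLyapunov T c r (c * r / 2) (x t) (v t)
      ≤ exp (-nagRate (c * r / 4) * (c / 2) * t) * nagLyapunov T c r (c * r / 2) (x 0) (v 0) := by
  simp only [hT.nagLyapunov_eq_sum, Finset.mul_sum]
  refine Finset.sum_le_sum fun i _ => ?_
  have hμ := hT.le_eigenvalues hlow i
  have hcoord {f f' : ℝ → E} (hf : ∀ t, 0 ≤ t → HasDerivAt f (f' t) t) (t : ℝ) (ht : 0 ≤ t) :
      HasDerivAt (fun t => ⟪hT.eigenvectorBasis rfl i, f t⟫)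
        ⟪hT.eigenvectorBasis rfl i, f' t⟫ t := by
    simpa using (hasDerivAt_const t (hT.eigenvectorBasis rfl i)).inner ℝ (hf t ht)
  rw [neg_mul]
  refine dampedEnergy_le_exp (nagRate_mul_lt hc hr (le_trans (by positivity) hμ))
    (nagRate_discriminant hc hr hμ) (hcoord hx) (hcoord hv) (fun t ht => ?_) ht
  have h := congrArg (⟪hT.eigenvectorBasis rfl i, ·⟫) (hode t ht)
  simp only [inner_add_right, real_inner_smul_right, hT.inner_eigenvectorBasis_apply,
    inner_zero_right] at h
  linear_combination h

end LinearMap.IsSymmetric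

theorem nag_lyapunov_decay_general
    (n : ℕ) (H : Matrix (Fin n) (Fin n) ℝ) (hHsymm : H.IsSymm)
    (lam0 s : ℝ) (hlam0 : 0 < lam0)
    (hs : 0 < s)
    (hlow : ∀ v : EuclideanSpace ℝ (Fin n),
      lam0 / 2 * ‖v‖ ^ 2 ≤ ⟪v, Matrix.toEuclideanLin H v⟫)
    (Δ : ℝ → EuclideanSpace ℝ (Fin n)) (hΔ : ContDiff ℝ 2 Δ)
    (hode : ∀ t : ℝ, 0 ≤ t →
      deriv (deriv Δ) t + Real.sqrt (2 * lam0) • deriv Δ t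
        + Real.sqrt s • Matrix.toEuclideanLin H (deriv Δ t)
        + (1 + Real.sqrt (lam0 * s / 2)) • Matrix.toEuclideanLin H (Δ t) = 0)
    (V : ℝ → ℝ)
    (hV : ∀ t : ℝ, V t =
      (1 + Real.sqrt (lam0 * s / 2)) * ((1 / 2) * ⟪Δ t, Matrix.toEuclideanLin H (Δ t)⟫)
        + (1 / 4) * ‖deriv Δ t‖ ^ 2
        + (1 / 4) * ‖deriv Δ t + Real.sqrt (2 * lam0) • Δ t
            + Real.sqrt s • Matrix.toEuclideanLin H (Δ t)‖ ^ 2) :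
    ∀ t : ℝ, 0 ≤ t →
      V t ≤ Real.exp (-((1 / 2) * (4 + 3 * (Real.sqrt (2 * lam0 * s) / 4)
            - Real.sqrt (8 + 16 * (Real.sqrt (2 * lam0 * s) / 4)
                + 9 * (Real.sqrt (2 * lam0 * s) / 4) ^ 2)))
          * Real.sqrt (lam0 / 2) * t) * V 0 := by
  intro t ht
  have hT : (Matrix.toEuclideanLin H).IsSymmetric :=
    Matrix.isSymmetric_toEuclideanLin_iff.mpr (Matrix.isHermitian_iff_isSymm.mpr hHsymm)
  have hc2 : √(2 * lam0) ^ 2 / 4 = lam0 / 2 := by rw [sq_sqrt (by positivity)]; ring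
  have hcr : √(2 * lam0 * s) = √(2 * lam0) * √s := sqrt_mul (by positivity) s
  have hβ : √(lam0 * s / 2) = √(2 * lam0) * √s / 2 := by
    rw [← hcr, show 2 * lam0 * s = 2 ^ 2 * (lam0 * s / 2) by ring, sqrt_mul' _ (by positivity),
      sqrt_sq two_pos.le]
    ring
  have hhalf : √(lam0 / 2) = √(2 * lam0) / 2 := by
    rw [show 2 * lam0 = 2 ^ 2 * (lam0 / 2) by ring, sqrt_mul' _ (by positivity), sqrt_sq two_pos.le]
    ring
  have key := hT.nagLyapunov_le_exp (sqrt_pos.2 (by positivity)) (sqrt_nonneg s)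
    (fun v => hc2 ▸ hlow v) (fun t _ => (hΔ.differentiable two_ne_zero t).hasDerivAt)
    (fun t _ => (hΔ.differentiable_deriv_two t).hasDerivAt) (fun t ht => hβ ▸ hode t ht) ht
  rw [hV t, hV 0, hβ, hhalf, hcr]
  exact key

theorem nag_lyapunov_decay
    (n : ℕ) (hn : 0 < n) (H : Matrix (Fin n) (Fin n) ℝ) (hHsymm : H.IsSymm)
    (lam0 lamm s : ℝ) (hlam0 : 0 < lam0) (hlamm : 0 < lamm)
    (hs : 0 < s) (hs2 : s ≤ 2 / lamm)
    (hlow : ∀ v : EuclideanSpace ℝ (Fin n),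
      lam0 / 2 * ‖v‖ ^ 2 ≤ ⟪v, Matrix.toEuclideanLin H v⟫)
    (hup : ∀ v : EuclideanSpace ℝ (Fin n),
      ⟪v, Matrix.toEuclideanLin H v⟫ ≤ lamm * ‖v‖ ^ 2)
    (Δ : ℝ → EuclideanSpace ℝ (Fin n)) (hΔ : ContDiff ℝ 2 Δ)
    (hode : ∀ t : ℝ, 0 ≤ t →
      deriv (deriv Δ) t + Real.sqrt (2 * lam0) • deriv Δ t
        + Real.sqrt s • Matrix.toEuclideanLin H (deriv Δ t)
        + (1 + Real.sqrt (lam0 * s / 2)) • Matrix.toEuclideanLin H (Δ t) = 0)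
    (V : ℝ → ℝ)
    (hV : ∀ t : ℝ, V t =
      (1 + Real.sqrt (lam0 * s / 2)) * ((1 / 2) * ⟪Δ t, Matrix.toEuclideanLin H (Δ t)⟫)
        + (1 / 4) * ‖deriv Δ t‖ ^ 2
        + (1 / 4) * ‖deriv Δ t + Real.sqrt (2 * lam0) • Δ t
            + Real.sqrt s • Matrix.toEuclideanLin H (Δ t)‖ ^ 2) :
    ∀ t : ℝ, 0 ≤ t →
      V t ≤ Real.exp (-((1 / 2) * (4 + 3 * (Real.sqrt (2 * lam0 * s) / 4)
            - Real.sqrt (8 + 16 * (Real.sqrt (2 * lam0 * s) / 4)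
                + 9 * (Real.sqrt (2 * lam0 * s) / 4) ^ 2)))
          * Real.sqrt (lam0 / 2) * t) * V 0 :=
  nag_lyapunov_decay_general n H hHsymm lam0 s hlam0 hs hlow Δ hΔ hode V hV
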